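/- For any subset K of H(M_A,M_B), the following identities hold: K^⊳ = {φ ∈ H(M_A,M_B) : ψ*∘φ is completely positive for every ψ ∈ K}, and K^⊲ = {φ ∈ H(M_A,M_B) : φ∘ψ* is completely positive for every ψ ∈ K}. -/

import Mathlib

open Matrix Finset
open scoped ComplexOrder Kronecker

/-- The algebra of `n × n` complex matrices. -/
abbrev Mat (n : ℕ) := Matrix (Fin n) (Fin n) ℂ

/-- Linear maps between matrix algebras. -/
abbrev MMap (m n : ℕ) := Mat m →ₗ[ℂ] Mat n

/-- The bilinear pairing `⟨a,b⟩ = Tr(aᵀ b)`. -/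
noncomputable def mpair {ι : Type*} [Fintype ι] (x y : Matrix ι ι ℂ) : ℂ :=
  (xᵀ * y).trace

/-- The Choi matrix `C_φ = Σ_{i,j} e_{ij} ⊗ φ(e_{ij})`. -/
noncomputable def choi {m n : ℕ} (φ : MMap m n) :
    Matrix (Fin m × Fin n) (Fin m × Fin n) ℂ :=
  Matrix.of fun p q => φ (Matrix.single p.1 q.1 1) p.2 q.2

/-- The pairing on maps `⟨φ,ψ⟩ = ⟨C_φ, C_ψ⟩`. -/
noncomputable def mapPair {m n : ℕ} (φ ψ : MMap m n) : ℂ := mpair (choi φ) (choi ψ)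

/-- The adjoint `φ*` with respect to the pairing `⟨a,b⟩ = Tr(aᵀ b)`:
it satisfies `⟨φ(a),b⟩ = ⟨a,φ*(b)⟩`. -/
noncomputable def adjMap {m n : ℕ} (φ : MMap m n) : MMap n m where
  toFun y := Matrix.of fun i j => mpair (φ (Matrix.single i j 1)) y
  map_add' y z := by
    ext i j
    simp [mpair, Matrix.mul_add]
  map_smul' c y := by
    ext i j
    simp [mpair, Matrix.mul_smul]

/-- Hermitian-preserving maps: `φ(a*) = φ(a)*`. -/
def IsHermP {m n : ℕ} (φ : MMap m n) : Prop := ∀ x : Mat m, φ xᴴ = (φ x)ᴴ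

/-- The real vector space `H(M_A,M_B)` of Hermitian-preserving maps, as a set. -/
def HermSet (m n : ℕ) : Set (MMap m n) := {φ | IsHermP φ}

/-- Positive maps: mapping positive semidefinite matrices to positive semidefinite ones. -/
def IsPosMap {m n : ℕ} (φ : MMap m n) : Prop :=
  ∀ x : Mat m, x.PosSemidef → (φ x).PosSemidef

/-- Completely positive maps: those whose Choi matrix is positive semidefinite. -/
def IsCP {m n : ℕ} (φ : MMap m n) : Prop := (choi φ).PosSemidef

/-- The cone `CP` of completely positive maps. -/
def CPset (m n : ℕ) : Set (MMap m n) := {φ | IsCP φ}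

/-- `K₁ ∘ K₀ = {φ₁ ∘ φ₀ : φ₁ ∈ K₁, φ₀ ∈ K₀}`. -/
def compSet {m n p : ℕ} (K1 : Set (MMap n p)) (K0 : Set (MMap m n)) : Set (MMap m p) :=
  {χ | ∃ φ₁ ∈ K1, ∃ φ₀ ∈ K0, χ = φ₁ ∘ₗ φ₀}

/-- `K₂ ∘ K₁ ∘ K₀ = {φ₂ ∘ φ₁ ∘ φ₀ : φᵢ ∈ Kᵢ}`. -/
def comp3 {m n p q : ℕ} (K2 : Set (MMap p q)) (K1 : Set (MMap n p)) (K0 : Set (MMap m n)) :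
    Set (MMap m q) :=
  {χ | ∃ φ₂ ∈ K2, ∃ φ₁ ∈ K1, ∃ φ₀ ∈ K0, χ = φ₂ ∘ₗ φ₁ ∘ₗ φ₀}

/-- The dual cone `K° = {ψ ∈ H(M_A,M_B) : ⟨φ,ψ⟩ ≥ 0 for all φ ∈ K}`. -/
def dualCone {m n : ℕ} (K : Set (MMap m n)) : Set (MMap m n) :=
  {ψ | IsHermP ψ ∧ ∀ φ ∈ K, 0 ≤ mapPair φ ψ}

/-- `K* = {φ* : φ ∈ K}`. -/
noncomputable def starSet {m n : ℕ} (K : Set (MMap m n)) : Set (MMap n m) := adjMap '' K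

/-- `K^⊳ = (K ∘ CP_A)°`. -/
def rdualSet {m n : ℕ} (K : Set (MMap m n)) : Set (MMap m n) :=
  dualCone (compSet K (CPset m m))

/-- `K^⊲ = (CP_B ∘ K)°`. -/
def ldualSet {m n : ℕ} (K : Set (MMap m n)) : Set (MMap m n) :=
  dualCone (compSet (CPset n n) K)

/-- A convex cone of maps: closed under addition and nonnegative real scaling. -/
def IsConeSet {m n : ℕ} (K : Set (MMap m n)) : Prop :=
  (∀ φ ∈ K, ∀ ψ ∈ K, φ + ψ ∈ K) ∧ (∀ φ ∈ K, ∀ r : ℝ, 0 ≤ r → (r : ℂ) • φ ∈ K)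

/-- A closed convex cone of maps (closedness via the Choi isomorphism). -/
def IsClosedConeSet {m n : ℕ} (K : Set (MMap m n)) : Prop :=
  IsConeSet K ∧ IsClosed (choi '' K)

/-- Ampliation `1_Z ⊗ σ : M_Z ⊗ M_X → M_Z ⊗ M_Y`. -/
def idTensor {z x y : ℕ} (σ : MMap x y)
    (M : Matrix (Fin z × Fin x) (Fin z × Fin x) ℂ) :
    Matrix (Fin z × Fin y) (Fin z × Fin y) ℂ :=
  Matrix.of fun p q => σ (Matrix.of fun k l => M (p.1, k) (q.1, l)) p.2 q.2

/-- Ampliation `σ ⊗ 1_Z : M_X ⊗ M_Z → M_Y ⊗ M_Z`. -/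
def tensorId {x y z : ℕ} (σ : MMap x y)
    (M : Matrix (Fin x × Fin z) (Fin x × Fin z) ℂ) :
    Matrix (Fin y × Fin z) (Fin y × Fin z) ℂ :=
  Matrix.of fun p q => σ (Matrix.of fun i j => M (i, p.2) (j, q.2)) p.1 q.1

/-- `S_1`: the closed convex cone generated by `x ⊗ y` with `x, y` positive semidefinite. -/
def SepCone (m n : ℕ) : Set (Matrix (Fin m × Fin n) (Fin m × Fin n) ℂ) :=
  closure {X | ∃ (r : ℕ) (x : Fin r → Mat m) (y : Fin r → Mat n),
    (∀ i, (x i).PosSemidef ∧ (y i).PosSemidef) ∧ X = ∑ i, x i ⊗ₖ y i}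

/-- `SP_1`: Hermitian-preserving maps with separable Choi matrix. -/
def SP1set (m n : ℕ) : Set (MMap m n) := {φ | IsHermP φ ∧ choi φ ∈ SepCone m n}


/-- Vectors of Schmidt rank at most `k`. -/
def SchmidtRankLE (k : ℕ) {m n : ℕ} (ξ : Fin m × Fin n → ℂ) : Prop :=
  ∃ (u : Fin k → Fin m → ℂ) (v : Fin k → Fin n → ℂ),
    ξ = fun p => ∑ i, u i p.1 * v i p.2

/-- `k`-blockpositive matrices: `⟨Y, |ξ⟩⟨ξ|⟩ ≥ 0` for every `ξ` of Schmidt rank at most `k`. -/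
def BlockPos (k : ℕ) {m n : ℕ} (Y : Matrix (Fin m × Fin n) (Fin m × Fin n) ℂ) : Prop :=
  ∀ ξ : Fin m × Fin n → ℂ, SchmidtRankLE k ξ →
    0 ≤ mpair Y (Matrix.of fun p q => ξ p * star (ξ q))

/-- `S_k`: the closed convex cone generated by `|ξ⟩⟨ξ|` for `ξ` of Schmidt rank at most `k`. -/
def SchmidtCone (k m n : ℕ) : Set (Matrix (Fin m × Fin n) (Fin m × Fin n) ℂ) :=
  closure {X | ∃ (r : ℕ) (ξ : Fin r → Fin m × Fin n → ℂ),
    (∀ i, SchmidtRankLE k (ξ i)) ∧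
    X = ∑ i, Matrix.of fun p q => ξ i p * star (ξ i q)}

/-- `k`-positive maps: the ampliation `1_{M_k} ⊗ φ` is a positive map. -/
def IsKPos (k : ℕ) {m n : ℕ} (φ : MMap m n) : Prop :=
  ∀ X : Matrix (Fin k × Fin m) (Fin k × Fin m) ℂ, X.PosSemidef → (idTensor φ X).PosSemidef

/-- The transpose map as a linear map. -/
def tmap (m : ℕ) : MMap m m where
  toFun x := xᵀ
  map_add' x y := by simp [Matrix.transpose_add]
  map_smul' c x := by simp [Matrix.transpose_smul]

/-- Completely copositive maps: `CCP = {φ ∘ t : φ ∈ CP}`. -/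
def CCPset (m : ℕ) : Set (MMap m m) := {χ | ∃ φ, IsCP φ ∧ χ = φ ∘ₗ tmap m}

/-- PPT maps: `PPT = CP ∩ CCP`. -/
def PPTset (m : ℕ) : Set (MMap m m) := CPset m m ∩ CCPset m

/-- Decomposable maps: the convex hull of `CP` and `CCP`. -/
noncomputable def DECset (m : ℕ) : Set (MMap m m) := convexHull ℝ (CPset m m ∪ CCPset m)

/-- The cone `P_1` of positive maps. -/
def P1set (m n : ℕ) : Set (MMap m n) := {φ | IsPosMap φ}

/-- A right-mapping cone: a closed convex cone of positive (Hermitian-preserving) maps `L`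
with `L ∘ CP_A ⊆ L`. -/
def IsRMC {m n : ℕ} (L : Set (MMap m n)) : Prop :=
  L ⊆ HermSet m n ∧ (∀ φ ∈ L, IsPosMap φ) ∧ IsClosedConeSet L ∧
    compSet L (CPset m m) ⊆ L

/-- A left-mapping cone: a closed convex cone of positive (Hermitian-preserving) maps `L`
with `CP_B ∘ L ⊆ L`. -/
def IsLMC {m n : ℕ} (L : Set (MMap m n)) : Prop :=
  L ⊆ HermSet m n ∧ (∀ φ ∈ L, IsPosMap φ) ∧ IsClosedConeSet L ∧
    compSet (CPset n n) L ⊆ L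

/-! Both identities come from computing the pairing of maps as a trace: `⟨χ, φ⟩ = Tr(χ* ∘ φ)`.
Hence `⟨ψ ∘ α, φ⟩ = Tr(α* ∘ ψ* ∘ φ) = ⟨α, ψ* ∘ φ⟩`, and by cyclicity of the trace
`⟨β ∘ ψ, φ⟩ = Tr(ψ* ∘ β* ∘ φ) = Tr(β* ∘ φ ∘ ψ*) = ⟨β, φ ∘ ψ*⟩`. So `φ ∈ K^⊳` says that
`⟨α, ψ* ∘ φ⟩ ≥ 0` for all completely positive `α` and all `ψ ∈ K`; as every matrix is a Choi
matrix and the positive semidefinite cone is self-dual for `⟨·,·⟩`, this means that `ψ* ∘ φ` is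
completely positive. -/

lemma mpair_eq_sum {ι : Type*} [Fintype ι] (x y : Matrix ι ι ℂ) :
    mpair x y = ∑ p, ∑ q, x p q * y p q := by
  simp only [mpair, Matrix.trace, Matrix.diag, Matrix.mul_apply, Matrix.transpose_apply]
  exact Finset.sum_comm

lemma mpair_single_left {ι : Type*} [Fintype ι] [DecidableEq ι] (s t : ι) (x : Matrix ι ι ℂ) :
    mpair (Matrix.single s t 1) x = x s t := by
  simp [mpair_eq_sum, Matrix.single_apply, ite_and]

lemma mpair_vecMulVec_star_self {ι : Type*} [Fintype ι] (x : ι → ℂ) (M : Matrix ι ι ℂ) :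
    mpair (Matrix.vecMulVec (star x) x) M = star x ⬝ᵥ (M *ᵥ x) := by
  simp only [mpair_eq_sum, Matrix.vecMulVec_apply, dotProduct, Matrix.mulVec, Finset.mul_sum,
    Pi.star_apply, mul_assoc, mul_comm (x _)]

open ComplexConjugate in
lemma Matrix.PosSemidef.of_forall_dotProduct_mulVec_nonneg {ι : Type*} [Fintype ι]
    [DecidableEq ι] {M : Matrix ι ι ℂ} (h : ∀ x, 0 ≤ star x ⬝ᵥ (M *ᵥ x)) : M.PosSemidef := by
  rw [← Matrix.isPositive_toEuclideanLin_iff, LinearMap.isPositive_iff_complex]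
  intro x
  have hx : inner ℂ (M.toEuclideanLin x) x = conj (star x.ofLp ⬝ᵥ (M *ᵥ x.ofLp)) := by
    rw [← inner_conj_symm, dotProduct_comm]
    rfl
  have hre := (Complex.eq_re_of_ofReal_le (r := 0) (by simpa using h x.ofLp)).symm
  rw [hx, Complex.conj_eq_iff_re.mpr hre]
  exact ⟨hre, (Complex.nonneg_iff.mp (h x.ofLp)).1⟩

lemma Matrix.PosSemidef.mpair_nonneg {ι : Type*} [Fintype ι] {C M : Matrix ι ι ℂ}
    (hC : C.PosSemidef) (hM : M.PosSemidef) : 0 ≤ mpair C M := by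
  simpa [mpair_eq_sum, dotProduct, Matrix.mulVec, Matrix.hadamard] using
    (hC.hadamard hM).dotProduct_mulVec_nonneg (fun _ => 1)

lemma posSemidef_iff_forall_mpair_nonneg {ι : Type*} [Fintype ι] [DecidableEq ι]
    (M : Matrix ι ι ℂ) : M.PosSemidef ↔ ∀ C : Matrix ι ι ℂ, C.PosSemidef → 0 ≤ mpair C M :=
  ⟨fun hM _ hC => hC.mpair_nonneg hM, fun h => .of_forall_dotProduct_mulVec_nonneg fun x =>
    mpair_vecMulVec_star_self x M ▸ h _ (Matrix.posSemidef_vecMulVec_star_self x)⟩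

section Maps

variable {m n p : ℕ}

lemma map_eq_sum_single (φ : MMap m n) (x : Mat m) :
    φ x = ∑ i, ∑ j, x i j • φ (Matrix.single i j 1) := by
  conv_lhs => rw [Matrix.matrix_eq_sum_single x]
  simp only [map_sum, ← map_smul, Matrix.smul_single, smul_eq_mul, mul_one]

lemma mpair_apply_eq_mpair_adjMap (φ : MMap m n) (x : Mat m) (y : Mat n) :
    mpair (φ x) y = mpair x (adjMap φ y) := by
  rw [mpair_eq_sum x, map_eq_sum_single φ x]
  simp only [mpair, Matrix.transpose_sum, Matrix.transpose_smul, Finset.sum_mul,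
    Matrix.smul_mul, Matrix.trace_sum, Matrix.trace_smul]
  rfl

lemma adjMap_comp (ψ : MMap n p) (φ : MMap m n) :
    adjMap (ψ ∘ₗ φ) = adjMap φ ∘ₗ adjMap ψ := by
  ext y s t
  exact mpair_apply_eq_mpair_adjMap ψ _ y

lemma trace_eq_sum_mpair (T : MMap m m) :
    LinearMap.trace ℂ (Mat m) T =
      ∑ i, ∑ j, mpair (Matrix.single i j 1) (T (Matrix.single i j 1)) := by
  rw [LinearMap.trace_eq_matrix_trace ℂ (Matrix.stdBasis ℂ (Fin m) (Fin m)), Matrix.trace,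
    Fintype.sum_prod_type]
  simp only [Matrix.diag_apply, LinearMap.toMatrix_apply, Matrix.stdBasis_eq_single,
    mpair_single_left]
  rfl

lemma mapPair_eq_sum (χ φ : MMap m n) :
    mapPair χ φ = ∑ i, ∑ j, mpair (χ (Matrix.single i j 1)) (φ (Matrix.single i j 1)) := by
  simp only [mapPair, mpair_eq_sum, Fintype.sum_prod_type, choi, Matrix.of_apply]
  exact Finset.sum_congr rfl fun i _ => Finset.sum_comm

lemma mapPair_eq_trace (χ φ : MMap m n) :
    mapPair χ φ = LinearMap.trace ℂ (Mat m) (adjMap χ ∘ₗ φ) := by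
  simp only [mapPair_eq_sum, trace_eq_sum_mpair, LinearMap.comp_apply,
    mpair_apply_eq_mpair_adjMap]

lemma mapPair_comp_left (ψ : MMap n p) (α : MMap m n) (φ : MMap m p) :
    mapPair (ψ ∘ₗ α) φ = mapPair α (adjMap ψ ∘ₗ φ) := by
  rw [mapPair_eq_trace, mapPair_eq_trace, adjMap_comp, LinearMap.comp_assoc]

lemma mapPair_comp_right (β : MMap n p) (ψ : MMap m n) (φ : MMap m p) :
    mapPair (β ∘ₗ ψ) φ = mapPair β (φ ∘ₗ adjMap ψ) := by
  rw [mapPair_eq_trace, mapPair_eq_trace, adjMap_comp, LinearMap.comp_assoc,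
    LinearMap.trace_comp_comm', LinearMap.comp_assoc]

lemma choi_surjective : Function.Surjective (choi (m := m) (n := n)) := by
  intro C
  refine ⟨{ toFun := fun x => Matrix.of fun k l => ∑ i, ∑ j, x i j * C (i, k) (j, l)
            map_add' := ?_
            map_smul' := ?_ }, ?_⟩
  · intro x y
    ext k l
    simp [add_mul, Finset.sum_add_distrib]
  · intro c x
    ext k l
    simp [Finset.mul_sum, mul_assoc]
  · ext ⟨i, k⟩ ⟨j, l⟩
    simp [choi, Matrix.single_apply, ite_and]

lemma isCP_iff_forall_mapPair_nonneg (χ : MMap m n) :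
    IsCP χ ↔ ∀ α : MMap m n, IsCP α → 0 ≤ mapPair α χ := by
  rw [IsCP, posSemidef_iff_forall_mpair_nonneg, choi_surjective.forall]
  rfl

lemma forall_mem_compSet {K₁ : Set (MMap n p)} {K₀ : Set (MMap m n)} {P : MMap m p → Prop} :
    (∀ χ ∈ compSet K₁ K₀, P χ) ↔ ∀ φ₁ ∈ K₁, ∀ φ₀ ∈ K₀, P (φ₁ ∘ₗ φ₀) := by
  refine ⟨fun h φ₁ h₁ φ₀ h₀ => h _ ⟨φ₁, h₁, φ₀, h₀, rfl⟩, ?_⟩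
  rintro h _ ⟨φ₁, h₁, φ₀, h₀, rfl⟩
  exact h φ₁ h₁ φ₀ h₀

end Maps

theorem stmt5_general {a b : ℕ} (K : Set (MMap a b)) :
    rdualSet K = {φ : MMap a b | IsHermP φ ∧ ∀ ψ ∈ K, IsCP (adjMap ψ ∘ₗ φ)} ∧
    ldualSet K = {φ : MMap a b | IsHermP φ ∧ ∀ ψ ∈ K, IsCP (φ ∘ₗ adjMap ψ)} := by
  refine ⟨Set.ext fun φ => and_congr_right fun _ => ?_,
    Set.ext fun φ => and_congr_right fun _ => ?_⟩
  · simp only [forall_mem_compSet, mapPair_comp_left]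
    exact forall₂_congr fun ψ _ => (isCP_iff_forall_mapPair_nonneg _).symm
  · rw [forall_mem_compSet, forall₂_comm]
    simp only [mapPair_comp_right]
    exact forall₂_congr fun ψ _ => (isCP_iff_forall_mapPair_nonneg _).symm

/-- `K^⊳` and `K^⊲` described via compositions. -/
theorem stmt5 {a b : ℕ} (K : Set (MMap a b)) (hH : K ⊆ HermSet a b) :
    rdualSet K = {φ : MMap a b | IsHermP φ ∧ ∀ ψ ∈ K, IsCP (adjMap ψ ∘ₗ φ)} ∧
    ldualSet K = {φ : MMap a b | IsHermP φ ∧ ∀ ψ ∈ K, IsCP (φ ∘ₗ adjMap ψ)} :=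
  stmt5_general K
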